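/- For the BCC lattice Λ generated by (−1/2,1/2,1/2), (1/2,−1/2,1/2), (1/2,1/2,−1/2), the set { λ ∈ Λ : |λ| is minimal among nonzero lattice vectors } consists of exactly 8 vectors, each of norm √3/2, namely (±1/2, ±1/2, ±1/2). -/

import Mathlib

noncomputable section

/-- Embed a coordinate vector into `EuclideanSpace ℝ (Fin 3)`. -/
def ev (x : Fin 3 → ℝ) : EuclideanSpace ℝ (Fin 3) := (WithLp.equiv 2 (Fin 3 → ℝ)).symm x

/-- The BCC lattice generated by `(−1/2,1/2,1/2), (1/2,−1/2,1/2), (1/2,1/2,−1/2)`. -/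
def bccLat : Set (EuclideanSpace ℝ (Fin 3)) :=
  {x | ∃ n : Fin 3 → ℤ,
    x = n 0 • ev ![-1/2, 1/2, 1/2] + n 1 • ev ![1/2, -1/2, 1/2] + n 2 • ev ![1/2, 1/2, -1/2]}

lemma ev_apply (x : Fin 3 → ℝ) (i : Fin 3) : ev x i = x i := rfl

lemma mem_bcc_iff (x : EuclideanSpace ℝ (Fin 3)) :
    x ∈ bccLat ↔ ∃ a b c : ℤ, Even (a + b) ∧ Even (a + c) ∧
      x 0 = a / 2 ∧ x 1 = b / 2 ∧ x 2 = c / 2 := by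
  constructor
  · rintro ⟨n, rfl⟩
    refine ⟨-n 0 + n 1 + n 2, n 0 - n 1 + n 2, n 0 + n 1 - n 2, ⟨n 2, by ring⟩, ⟨n 1, by ring⟩,
      ?_, ?_, ?_⟩ <;>
    · simp [ev_apply]
      push_cast
      ring
  · rintro ⟨a, b, c, ⟨k, hk⟩, ⟨l, hl⟩, h0, h1, h2⟩
    refine ⟨![k + l - a, l, k], ?_⟩
    have hk' : (a : ℝ) + b = k + k := by exact_mod_cast hk
    have hl' : (a : ℝ) + c = l + l := by exact_mod_cast hl
    ext i
    fin_cases i <;> simp [ev_apply, h0, h1, h2] <;> push_cast <;> linarith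

lemma norm_eq3 (x : EuclideanSpace ℝ (Fin 3)) :
    ‖x‖ = Real.sqrt ((x 0)^2 + (x 1)^2 + (x 2)^2) := by
  rw [EuclideanSpace.norm_eq]
  simp [Fin.sum_univ_three, sq_abs]

lemma sq_ge_one {a : ℤ} (h : a ≠ 0) : 1 ≤ a ^ 2 := by
  have := Int.one_le_abs h
  nlinarith [sq_abs a]

lemma int_key {a b c : ℤ} (hab : Even (a + b)) (hac : Even (a + c))
    (h : ¬(a = 0 ∧ b = 0 ∧ c = 0)) :
    3 ≤ a ^ 2 + b ^ 2 + c ^ 2 ∧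
      (a ^ 2 + b ^ 2 + c ^ 2 ≤ 3 →
        (a = 1 ∨ a = -1) ∧ (b = 1 ∨ b = -1) ∧ (c = 1 ∨ c = -1)) := by
  rcases Int.even_or_odd a with ha | ha
  · have hb : Even b := by
      rcases Int.even_add.mp hab with h'; exact h'.mp ha
    have hc : Even c := by
      rcases Int.even_add.mp hac with h'; exact h'.mp ha
    obtain ⟨k, rfl⟩ := ha; obtain ⟨l, rfl⟩ := hb; obtain ⟨m, rfl⟩ := hc
    have : ¬(k = 0 ∧ l = 0 ∧ m = 0) := by
      intro ⟨h1, h2, h3⟩; exact h ⟨by omega, by omega, by omega⟩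
    have h4 : 1 ≤ k ^ 2 + l ^ 2 + m ^ 2 := by
      rcases not_and_or.mp this with h' | h'
      · nlinarith [sq_ge_one h', sq_nonneg l, sq_nonneg m]
      · rcases not_and_or.mp h' with h'' | h''
        · nlinarith [sq_ge_one h'', sq_nonneg k, sq_nonneg m]
        · nlinarith [sq_ge_one h'', sq_nonneg k, sq_nonneg l]
    constructor
    · nlinarith
    · intro hle; exfalso; nlinarith
  · have hb : Odd b := by
      rcases Int.even_add.mp hab with h'
      rcases Int.even_or_odd b with hb | hb
      · exact absurd (h'.mpr hb) (Int.not_even_iff_odd.mpr ha)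
      · exact hb
    have hc : Odd c := by
      rcases Int.even_add.mp hac with h'
      rcases Int.even_or_odd c with hc | hc
      · exact absurd (h'.mpr hc) (Int.not_even_iff_odd.mpr ha)
      · exact hc
    have ha1 : 1 ≤ a ^ 2 := sq_ge_one (by rintro rfl; simp at ha)
    have hb1 : 1 ≤ b ^ 2 := sq_ge_one (by rintro rfl; simp at hb)
    have hc1 : 1 ≤ c ^ 2 := sq_ge_one (by rintro rfl; simp at hc)
    refine ⟨by linarith, fun hle => ⟨?_, ?_, ?_⟩⟩
    · exact Int.isUnit_iff.mp (IsUnit.of_mul_eq_one (a := a) a (by nlinarith))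
    · exact Int.isUnit_iff.mp (IsUnit.of_mul_eq_one (a := b) b (by nlinarith))
    · exact Int.isUnit_iff.mp (IsUnit.of_mul_eq_one (a := c) c (by nlinarith))

lemma sign_mem {e : Fin 3 → ℝ} (h : ∀ i, e i = 1/2 ∨ e i = -1/2) : ev e ∈ bccLat := by
  classical
  rw [mem_bcc_iff]
  refine ⟨if e 0 = 1/2 then 1 else -1, if e 1 = 1/2 then 1 else -1, if e 2 = 1/2 then 1 else -1,
    ?_, ?_, ?_, ?_, ?_⟩ <;>
  · rcases h 0 with h0 | h0 <;> rcases h 1 with h1 | h1 <;> rcases h 2 with h2 | h2 <;>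
      simp [ev_apply, h0, h1, h2] <;> first | decide | norm_num

lemma sqrt34 : Real.sqrt (3/4) = Real.sqrt 3 / 2 := by
  rw [show (3:ℝ)/4 = (Real.sqrt 3 / 2)^2 by
      rw [div_pow, Real.sq_sqrt] <;> norm_num,
    Real.sqrt_sq (by positivity)]

lemma sign_norm {e : Fin 3 → ℝ} (h : ∀ i, e i = 1/2 ∨ e i = -1/2) :
    ‖ev e‖ = Real.sqrt 3 / 2 := by
  rw [norm_eq3]
  have hsum : (ev e 0)^2 + (ev e 1)^2 + (ev e 2)^2 = 3/4 := by
    rcases h 0 with h0 | h0 <;> rcases h 1 with h1 | h1 <;> rcases h 2 with h2 | h2 <;>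
      simp [ev_apply, h0, h1, h2] <;> norm_num
  rw [hsum, sqrt34]

lemma bccSign_ne_zero {e : Fin 3 → ℝ} (h : ∀ i, e i = 1/2 ∨ e i = -1/2) : ev e ≠ 0 := by
  intro h'
  have h0 : ev e 0 = 0 := by rw [h']; rfl
  rcases h 0 with he | he <;> rw [ev_apply, he] at h0 <;> norm_num at h0

lemma min_norm {y : EuclideanSpace ℝ (Fin 3)} (hy : y ∈ bccLat) (hy0 : y ≠ 0) :
    Real.sqrt 3 / 2 ≤ ‖y‖ := by
  obtain ⟨a, b, c, hab, hac, h0, h1, h2⟩ := (mem_bcc_iff y).mp hy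
  have hnz : ¬(a = 0 ∧ b = 0 ∧ c = 0) := by
    rintro ⟨rfl, rfl, rfl⟩
    apply hy0
    ext i
    fin_cases i <;> simp [h0, h1, h2]
  have h3 : (3:ℝ) ≤ (a:ℝ)^2 + (b:ℝ)^2 + (c:ℝ)^2 := by
    exact_mod_cast (int_key hab hac hnz).1
  rw [norm_eq3, h0, h1, h2, ← sqrt34]
  apply Real.sqrt_le_sqrt
  nlinarith


/-- The set of shortest nonzero vectors of the BCC lattice consists of
exactly the 8 vectors `(±1/2, ±1/2, ±1/2)`, each of norm `√3/2`. -/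
theorem stmt_9 (S : Set (EuclideanSpace ℝ (Fin 3)))
    (hS : S = {x ∈ bccLat | x ≠ 0 ∧ ∀ y ∈ bccLat, y ≠ 0 → ‖x‖ ≤ ‖y‖}) :
    S = {x | ∃ e : Fin 3 → ℝ, (∀ i, e i = 1/2 ∨ e i = -1/2) ∧ x = ev e} ∧
    S.ncard = 8 ∧
    ∀ x ∈ S, ‖x‖ = Real.sqrt 3 / 2 := by
  subst hS
  have hhalf : ∀ i : Fin 3, (fun _ : Fin 3 => (1:ℝ)/2) i = 1/2 ∨ (fun _ : Fin 3 => (1:ℝ)/2) i = -1/2 :=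
    fun i => Or.inl rfl
  have hset : {x ∈ bccLat | x ≠ 0 ∧ ∀ y ∈ bccLat, y ≠ 0 → ‖x‖ ≤ ‖y‖} =
      {x | ∃ e : Fin 3 → ℝ, (∀ i, e i = 1/2 ∨ e i = -1/2) ∧ x = ev e} := by
    ext x
    constructor
    · rintro ⟨hx, hx0, hmin⟩
      have hle : ‖x‖ ≤ Real.sqrt 3 / 2 := by
        have := hmin (ev fun _ => 1/2) (sign_mem hhalf) (bccSign_ne_zero hhalf)
        rwa [sign_norm hhalf] at this
      obtain ⟨a, b, c, hab, hac, h0, h1, h2⟩ := (mem_bcc_iff x).mp hx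
      have hnz : ¬(a = 0 ∧ b = 0 ∧ c = 0) := by
        rintro ⟨rfl, rfl, rfl⟩
        apply hx0
        ext i
        fin_cases i <;> simp [h0, h1, h2]
      have hsum : (a:ℝ)^2 + (b:ℝ)^2 + (c:ℝ)^2 ≤ 3 := by
        rw [norm_eq3, h0, h1, h2, ← sqrt34] at hle
        have := (Real.sqrt_le_sqrt_iff (by positivity)).mp hle
        nlinarith
      have hsum2 : a^2 + b^2 + c^2 ≤ 3 := by exact_mod_cast hsum
      obtain ⟨ha, hb, hc⟩ := (int_key hab hac hnz).2 hsum2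
      refine ⟨fun i => x i, ?_, rfl⟩
      intro i
      fin_cases i
      · show x 0 = 1/2 ∨ x 0 = -1/2
        rcases ha with rfl | rfl <;> [left; right] <;> rw [h0] <;> norm_num
      · show x 1 = 1/2 ∨ x 1 = -1/2
        rcases hb with rfl | rfl <;> [left; right] <;> rw [h1] <;> norm_num
      · show x 2 = 1/2 ∨ x 2 = -1/2
        rcases hc with rfl | rfl <;> [left; right] <;> rw [h2] <;> norm_num
    · rintro ⟨e, he, rfl⟩
      exact ⟨sign_mem he, bccSign_ne_zero he,
        fun y hy hy0 => (sign_norm he) ▸ min_norm hy hy0⟩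
  refine ⟨hset, ?_, ?_⟩
  · rw [hset]
    classical
    have hrange : {x | ∃ e : Fin 3 → ℝ, (∀ i, e i = 1/2 ∨ e i = -1/2) ∧ x = ev e} =
        Set.range (fun s : Fin 3 → Bool => ev fun i => if s i then (1/2:ℝ) else -1/2) := by
      ext x
      constructor
      · rintro ⟨e, he, rfl⟩
        refine ⟨fun i => if e i = 1/2 then true else false, ?_⟩
        ext j
        show (if (if e j = 1/2 then true else false) then (1/2:ℝ) else -1/2) = e j
        rcases he j with h | h <;> norm_num [h]
      · rintro ⟨s, rfl⟩
        refine ⟨fun i => if s i then (1/2:ℝ) else -1/2, ?_, rfl⟩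
        intro i
        by_cases h : s i <;> simp [h]
    have hinj : Function.Injective
        (fun s : Fin 3 → Bool => ev fun i => if s i then (1/2:ℝ) else -1/2) := by
      intro s t h
      funext i
      have hi := congrArg (fun v : EuclideanSpace ℝ (Fin 3) => v i) h
      simp only [ev_apply] at hi
      by_cases hs : s i <;> by_cases ht : t i <;> simp [hs, ht] at hi ⊢ <;> norm_num at hi
    rw [hrange, ← Set.image_univ, Set.ncard_image_of_injective _ hinj, Set.ncard_univ]
    simp
  · rw [hset]
    rintro x ⟨e, he, rfl⟩
    exact sign_norm he
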